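/- arXiv:2402.02990 — 4 statements merged into one kernel-verified Lean document; each statement's English description precedes it below -/
import Mathlib

section
/- Let Q be a diagonal unitary matrix with pairwise distinct entries and define the linear operator R(Q) on complex n×n matrices by R(Q)(X) := (1/2)(Ad_Q + id)∘(Ad_Q − id)^{-1}(X_⊥), where X_⊥ is the off-diagonal part of X and (Ad_Q − id)^{-1} is the inverse on the space of matrices with zero diagonal. Then R(Q) is antisymmetric with respect to the pairing ⟨X,Y⟩_I = Im tr(XY): ⟨R(Q)X, Y⟩_I = −⟨X, R(Q)Y⟩_I for all X,Y. -/
open Matrix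

/-- Ad_Q(M) = Q M Q⁻¹ for diagonal Q. -/
noncomputable def adQ {n : ℕ} (Q : Fin n → ℂ) (M : Matrix (Fin n) (Fin n) ℂ) :
    Matrix (Fin n) (Fin n) ℂ :=
  Matrix.diagonal Q * M * Matrix.diagonal (fun i => (Q i)⁻¹)

/-- The off-diagonal part of a matrix. -/
noncomputable def offDiag {n : ℕ} (M : Matrix (Fin n) (Fin n) ℂ) : Matrix (Fin n) (Fin n) ℂ :=
  M - Matrix.diagonal (fun i => M i i)

/-- The dynamical r-matrix R(Q) = (1/2)(Ad_Q + id)∘(Ad_Q − id)⁻¹ on off-diagonal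
parts is antisymmetric with respect to ⟨X,Y⟩_I = Im tr(XY). -/
theorem rQ_antisymmetric (n : ℕ) (Q : Fin n → ℂ) (hu : ∀ i, ‖Q i‖ = 1)
    (hinj : Function.Injective Q)
    (R : Matrix (Fin n) (Fin n) ℂ → Matrix (Fin n) (Fin n) ℂ)
    (hR : ∀ X, (∀ i, R X i i = 0) ∧
      (2 : ℂ) • (adQ Q (R X) - R X) = adQ Q (offDiag X) + offDiag X) :
    ∀ X Y : Matrix (Fin n) (Fin n) ℂ,
      ((R X * Y).trace).im = -(((X * R Y).trace).im) := by
  have hQ0 : ∀ i, Q i ≠ 0 := by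
    intro i h
    have := hu i
    rw [h] at this
    simp at this
  -- key entrywise relation: for i ≠ j, 2(Qᵢ−Qⱼ)(RX)ᵢⱼ = (Qᵢ+Qⱼ)Xᵢⱼ
  have key : ∀ (X : Matrix (Fin n) (Fin n) ℂ) (i j : Fin n), i ≠ j →
      2 * (Q i - Q j) * R X i j = (Q i + Q j) * X i j := by
    intro X i j hij
    have e := congrArg (fun M => M i j) (hR X).2
    simp only [adQ, offDiag, Matrix.smul_apply, Matrix.sub_apply, Matrix.add_apply,
      Matrix.mul_diagonal, Matrix.diagonal_mul, Matrix.diagonal_apply_ne _ hij,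
      smul_eq_mul] at e
    have hj := hQ0 j
    field_simp at e
    linear_combination e
  intro X Y
  have main : (R X * Y).trace = -((X * R Y).trace) := by
    have h : (R X * Y).trace + (X * R Y).trace = 0 := by
      rw [Matrix.trace, Matrix.trace]
      simp only [Matrix.diag, Matrix.mul_apply]
      rw [← Finset.sum_add_distrib]
      apply Finset.sum_eq_zero
      intro i _
      rw [← Finset.sum_add_distrib]
      apply Finset.sum_eq_zero
      intro j _
      by_cases hij : i = j
      · subst hij; simp [(hR X).1 i, (hR Y).1 i]
      · have hij' : j ≠ i := fun h => hij h.symm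
        have e1 := key X i j hij
        have e2 := key Y j i hij'
        have hab : Q i - Q j ≠ 0 := sub_ne_zero.mpr (fun h => hij (hinj h))
        have h2 : (2 : ℂ) * (Q i - Q j) ≠ 0 := by
          exact mul_ne_zero two_ne_zero hab
        apply mul_left_cancel₀ h2
        rw [mul_zero, mul_add]
        linear_combination Y j i * e1 - X i j * e2
    linear_combination h
  rw [main, Complex.neg_im]
end

section
/- For x ∈ ℝ, let ν(x) be the upper triangular n×n matrix with diagonal entries 1 and entries ν(x)_{jk} = (1 − e^{−x}) e^{(k−j)x/2} for j < k (and 0 below the diagonal). Then ν(−x) = ν(x)^{-1}. -/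
open Matrix

/-- The unipotent upper triangular matrix ν(x). -/
noncomputable def nuRS (n : ℕ) (x : ℝ) : Matrix (Fin n) (Fin n) ℝ :=
  Matrix.of fun j k =>
    if j = k then 1
    else if j < k then (1 - Real.exp (-x)) * Real.exp ((((k : ℕ) : ℝ) - ((j : ℕ) : ℝ)) * x / 2)
    else 0

/-!
With `q = e^{x/2}` and `N` the nilpotent matrix with ones on the superdiagonal, the entries
of `ν(x)` above the diagonal are `(1 - q⁻²) q^d` on the `d`-th superdiagonal, and a one-line
entry computation gives `ν(x) (1 - q N) = 1 - q⁻¹ N`, i.e. `ν(x) = (1 - q⁻¹ N)(1 - q N)⁻¹`.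
Since `x ↦ -x` swaps `q` and `q⁻¹`, `ν(x) ν(-x) (1 - q⁻¹ N) = ν(x) (1 - q N) = 1 - q⁻¹ N`,
and `1 - q⁻¹ N` is unitriangular, hence invertible, so `ν(x) ν(-x) = 1`.
-/

namespace Matrix

variable {R : Type*} {n : ℕ}

def superdiagOnes (R : Type*) [Zero R] [One R] (n : ℕ) : Matrix (Fin n) (Fin n) R :=
  of fun j k => if (k : ℕ) = j + 1 then 1 else 0

section Semiring

variable [Semiring R]

theorem mul_superdiagOnes_apply_of_eq_succ (A : Matrix (Fin n) (Fin n) R) {j k m : Fin n}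
    (hk : (k : ℕ) = m + 1) : (A * superdiagOnes R n) j k = A j m := by
  rw [mul_apply, Finset.sum_eq_single m]
  · simp [superdiagOnes, hk]
  · intro i _ hi
    simp [superdiagOnes, hk, Fin.val_ne_of_ne hi.symm]
  · simp

theorem mul_superdiagOnes_apply_zero (A : Matrix (Fin n) (Fin n) R) {j k : Fin n}
    (hk : (k : ℕ) = 0) : (A * superdiagOnes R n) j k = 0 := by
  simp [mul_apply, superdiagOnes, hk]

theorem IsUpperTriangular.mul_superdiagOnes_apply_of_le {A : Matrix (Fin n) (Fin n) R}
    (hA : A.IsUpperTriangular) {j k : Fin n} (h : k ≤ j) : (A * superdiagOnes R n) j k = 0 := by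
  rw [Fin.le_def] at h
  rcases Nat.eq_zero_or_pos k with hk | hk
  · exact mul_superdiagOnes_apply_zero A hk
  · rw [mul_superdiagOnes_apply_of_eq_succ A (m := ⟨k - 1, by omega⟩) (by simp; omega)]
    exact hA (show (⟨k - 1, _⟩ : Fin n) < j by rw [Fin.lt_def]; simp only; omega)

end Semiring

theorem isUnit_one_sub_smul_superdiagOnes [CommRing R] (c : R) :
    IsUnit (1 - c • superdiagOnes R n) := by
  have hU : (1 - c • superdiagOnes R n).IsUpperTriangular := by
    intro j k (hkj : k < j)
    simp [superdiagOnes, one_apply_ne hkj.ne', show (k : ℕ) ≠ j + 1 by omega]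
  rw [isUnit_iff_isUnit_det, det_of_isUpperTriangular hU]
  simp [superdiagOnes]

end Matrix

section nuMatrix

variable {K : Type*} [Field K] {n : ℕ}

def nuMatrix (n : ℕ) (q : K) : Matrix (Fin n) (Fin n) K :=
  of fun j k => if j = k then 1 else if j < k then (1 - q⁻¹ ^ 2) * q ^ ((k : ℕ) - j) else 0

theorem nuMatrix_apply_self (q : K) (j : Fin n) : nuMatrix n q j j = 1 := by
  simp [nuMatrix]

theorem nuMatrix_apply_of_lt (q : K) {j k : Fin n} (h : j < k) :
    nuMatrix n q j k = (1 - q⁻¹ ^ 2) * q ^ ((k : ℕ) - j) := by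
  simp [nuMatrix, h, h.ne]

theorem nuMatrix_isUpperTriangular (q : K) : (nuMatrix n q).IsUpperTriangular :=
  fun j k (h : k < j) => by simp [nuMatrix, h.ne', h.not_gt]

theorem nuMatrix_mul_one_sub_smul_superdiagOnes {q : K} (hq : q ≠ 0) :
    nuMatrix n q * (1 - q • superdiagOnes K n) = 1 - q⁻¹ • superdiagOnes K n := by
  ext j k
  rw [mul_sub, mul_one, Matrix.mul_smul, Matrix.sub_apply, Matrix.sub_apply, Matrix.smul_apply,
    Matrix.smul_apply, smul_eq_mul, smul_eq_mul]
  have hN : superdiagOnes K n j k = if (k : ℕ) = j + 1 then 1 else 0 := rfl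
  rcases lt_trichotomy j k with hjk | rfl | hkj
  · obtain ⟨m, hkm⟩ : ∃ m : Fin n, (k : ℕ) = m + 1 := ⟨⟨k - 1, by omega⟩, by simp; omega⟩
    rw [mul_superdiagOnes_apply_of_eq_succ _ hkm, nuMatrix_apply_of_lt q hjk,
      one_apply_ne hjk.ne, hN]
    rcases (show j ≤ m by rw [Fin.le_def]; omega).lt_or_eq with hjm | rfl
    · rw [nuMatrix_apply_of_lt q hjm, if_neg (by rw [Fin.lt_def] at hjm; omega),
        hkm, Nat.sub_add_comm hjm.le, pow_succ']
      ring
    · rw [nuMatrix_apply_self, if_pos hkm, hkm, Nat.add_sub_cancel_left]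
      linear_combination (-q⁻¹) * mul_inv_cancel₀ hq
  · rw [nuMatrix_apply_self, one_apply_eq, hN, if_neg (by omega),
      (nuMatrix_isUpperTriangular q).mul_superdiagOnes_apply_of_le le_rfl]
    simp
  · rw [nuMatrix_isUpperTriangular q hkj, one_apply_ne hkj.ne', hN,
      if_neg (by rw [Fin.lt_def] at hkj; omega),
      (nuMatrix_isUpperTriangular q).mul_superdiagOnes_apply_of_le hkj.le]
    simp

theorem nuMatrix_mul_nuMatrix_inv {q : K} (hq : q ≠ 0) : nuMatrix n q * nuMatrix n q⁻¹ = 1 := by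
  rw [← (isUnit_one_sub_smul_superdiagOnes q⁻¹).mul_eq_right, mul_assoc,
    nuMatrix_mul_one_sub_smul_superdiagOnes (inv_ne_zero hq), inv_inv,
    nuMatrix_mul_one_sub_smul_superdiagOnes hq]

end nuMatrix

theorem nuRS_eq_nuMatrix (n : ℕ) (x : ℝ) : nuRS n x = nuMatrix n (Real.exp (x / 2)) := by
  ext j k
  rcases lt_trichotomy j k with hjk | rfl | hkj
  · have hexp : Real.exp (-x) = (Real.exp (x / 2))⁻¹ ^ 2 := by
      rw [← Real.exp_neg, ← Real.exp_nat_mul]; ring_nf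
    have hpow : Real.exp ((((k : ℕ) : ℝ) - ((j : ℕ) : ℝ)) * x / 2) =
        Real.exp (x / 2) ^ ((k : ℕ) - j) := by
      rw [← Real.exp_nat_mul, Nat.cast_sub hjk.le]; ring_nf
    simp [nuRS, nuMatrix_apply_of_lt _ hjk, hjk, hjk.ne, hexp, hpow]
  · simp [nuRS, nuMatrix_apply_self]
  · simp [nuRS, nuMatrix_isUpperTriangular _ hkj, hkj.ne', hkj.not_gt]

/-- ν(−x) = ν(x)⁻¹. -/
theorem nuRS_neg (n : ℕ) (x : ℝ) : nuRS n (-x) = (nuRS n x)⁻¹ := by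
  rw [nuRS_eq_nuMatrix, nuRS_eq_nuMatrix, neg_div, Real.exp_neg]
  exact (inv_eq_right_inv (nuMatrix_mul_nuMatrix_inv (Real.exp_pos _).ne')).symm
end

section
/- Let L be a diagonal n×n matrix with distinct positive diagonal entries and let g = C·(E_{n,1} + Σ_{i=1}^{n−1} E_{i,i+1}) be a scalar multiple of the cyclic permutation matrix with C chosen so that det(g) = 1, C an n-th root of (−1)^{n−1}. Then any unitary matrix η ∈ SU(n) satisfying both η g η^{-1} = g and η L η^{-1} = L is a scalar multiple of the identity, i.e. lies in the center Z(SU(n)). -/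
open Matrix

/-- The cyclic permutation matrix E_{n,1} + Σ_{i=1}^{n-1} E_{i,i+1}. -/
def cyc (n : ℕ) : Matrix (Fin n) (Fin n) ℂ :=
  Matrix.of fun i j => if (j : ℕ) = ((i : ℕ) + 1) % n then 1 else 0

/-- If L is diagonal with distinct positive entries and g = C·(cyclic permutation)
with det g = 1, then a special unitary η commuting with both g and L is central. -/
theorem simultaneous_stabilizer_central (n : ℕ) (hn : 0 < n) (d : Fin n → ℝ)
    (hpos : ∀ i, 0 < d i) (hinj : Function.Injective d)
    (C : ℂ) (hC : C ^ n = (-1 : ℂ) ^ (n - 1))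
    (η : Matrix (Fin n) (Fin n) ℂ) (hηu : ηᴴ * η = 1) (hηdet : η.det = 1)
    (hg : η * (C • cyc n) = (C • cyc n) * η)
    (hL : η * Matrix.diagonal (fun i => (d i : ℂ)) =
          Matrix.diagonal (fun i => (d i : ℂ)) * η) :
    ∃ ζ : ℂ, ζ ^ n = 1 ∧ η = ζ • (1 : Matrix (Fin n) (Fin n) ℂ) := by
  -- C ≠ 0
  have hC0 : C ≠ 0 := by
    intro h
    rw [h, zero_pow hn.ne'] at hC
    exact (pow_ne_zero _ (by norm_num : (-1 : ℂ) ≠ 0)) hC.symm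
  -- η is diagonal
  have hdiag : ∀ i j : Fin n, i ≠ j → η i j = 0 := by
    intro i j hij
    have h := Matrix.ext_iff.mpr hL i j
    rw [Matrix.mul_diagonal, Matrix.diagonal_mul] at h
    have hd : (d j : ℂ) ≠ (d i : ℂ) := by
      intro h'
      exact hij (hinj (by exact_mod_cast h') : j = i).symm
    have : η i j * ((d j : ℂ) - (d i : ℂ)) = 0 := by ring_nf; linear_combination h
    rcases mul_eq_zero.mp this with h' | h'
    · exact h'
    · exact absurd (sub_eq_zero.mp h') hd
  -- cancel C in hg
  have hg' : η * cyc n = cyc n * η := by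
    have : C • (η * cyc n) = C • (cyc n * η) := by
      rw [← Matrix.mul_smul, ← Matrix.smul_mul]; exact hg
    exact smul_right_injective _ hC0 this
  have hηd : η = Matrix.diagonal (fun i => η i i) := by
    ext i j
    by_cases h : i = j
    · subst h; simp [Matrix.diagonal]
    · simp [Matrix.diagonal, h, hdiag i j h]
  -- relation between consecutive diagonal entries
  have hrel : ∀ i j : Fin n, (j : ℕ) = ((i : ℕ) + 1) % n → η i i = η j j := by
    intro i j hij
    have h := Matrix.ext_iff.mpr hg' i j
    rw [hηd] at h
    rw [Matrix.diagonal_mul, Matrix.mul_diagonal] at h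
    simpa [cyc, hij] using h
  -- all diagonal entries equal
  set ζ : ℂ := η ⟨0, hn⟩ ⟨0, hn⟩ with hζ
  have hall : ∀ i : Fin n, η i i = ζ := by
    intro i
    obtain ⟨k, hk⟩ := i
    induction k with
    | zero => rfl
    | succ m ih =>
      have hm : m < n := Nat.lt_of_succ_lt hk
      have := hrel ⟨m, hm⟩ ⟨m + 1, hk⟩ (by simp [Nat.mod_eq_of_lt hk])
      rw [← this]; exact ih hm
  refine ⟨ζ, ?_, ?_⟩
  · have : η.det = ζ ^ n := by
      rw [hηd, Matrix.det_diagonal]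
      simp only [hall]
      simp
    rw [← this, hηdet]
  · ext i j
    by_cases h : i = j
    · subst h; simp [hall i]
    · simp [Matrix.one_apply_ne h, hdiag i j h]
end

section
/- Let B be the group of upper triangular complex n×n matrices with positive real diagonal, and for unitary η ∈ U(n) define Dress_η(b) as the B-factor in the Iwasawa decomposition of ηb (i.e. ηb = Dress_η(b)·u with u unitary). Then Dress defines a group action: Dress_{η₁}(Dress_{η₂}(b)) = Dress_{η₁η₂}(b) for all η₁, η₂ ∈ U(n) and b ∈ B. -/
/-!
`η₁ η₂ b = b₂ (u₂ u₁) = b₃ u₃`, so `w = u₂ u₁ u₃ᴴ = b₂⁻¹ b₃` is both unitary and upper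
triangular with positive diagonal. A unitary upper triangular matrix is diagonal, because its
inverse `wᴴ` is upper triangular too; a unitary diagonal matrix with positive diagonal is `1`.
-/

open Matrix

/-- Membership in B(n): upper triangular with positive real diagonal. -/
def inBgrp {n : ℕ} (b : Matrix (Fin n) (Fin n) ℂ) : Prop :=
  (∀ i j : Fin n, j < i → b i j = 0) ∧ ∀ i, (b i i).im = 0 ∧ 0 < (b i i).re

open ComplexOrder

theorem Complex.eq_one_of_mul_pos_of_star_mul_self {b z : ℂ} (hb : 0 < b) (hbz : 0 < b * z)
    (hz : star z * z = 1) : z = 1 := by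
  have hz_pos : 0 < z := by
    have := div_pos hbz hb
    rwa [mul_div_cancel_left₀ z hb.ne'] at this
  rw [(IsSelfAdjoint.of_nonneg hz_pos.le).star_eq, mul_self_eq_one_iff] at hz
  refine hz.resolve_right fun h => ?_
  rw [h] at hz_pos
  exact hz_pos.not_ge (by norm_num)

namespace Matrix

variable {m R : Type*} [LinearOrder m]

theorem IsDiag.isUpperTriangular [Zero R] {A : Matrix m m R} (hA : A.IsDiag) :
    A.IsUpperTriangular :=
  fun _ _ h => hA h.ne'

variable [Fintype m]

theorem IsUpperTriangular.mul_apply_diag [NonUnitalNonAssocSemiring R] {A B : Matrix m m R}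
    (hA : A.IsUpperTriangular) (hB : B.IsUpperTriangular) (i : m) :
    (A * B) i i = A i i * B i i := by
  rw [mul_apply, Finset.sum_eq_single i]
  · intro k _ hki
    rcases hki.lt_or_gt with hk | hk
    · rw [hA hk, zero_mul]
    · rw [hB hk, mul_zero]
  · exact fun h => absurd (Finset.mem_univ i) h

variable [DecidableEq m]

theorem IsUpperTriangular.isDiag_of_conjTranspose_mul_self [Field R] [StarRing R]
    {w : Matrix m m R} (hw : w.IsUpperTriangular) (hunit : wᴴ * w = 1) : w.IsDiag := by
  have : Invertible w := invertibleOfLeftInverse w wᴴ hunit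
  have hwH : wᴴ.IsUpperTriangular :=
    inv_eq_left_inv hunit ▸ blockTriangular_inv_of_blockTriangular hw
  intro i j hij
  rcases hij.lt_or_gt with h | h
  · simpa using hwH h
  · exact hw h

theorem IsUpperTriangular.eq_one_of_mul_eq {b c w : Matrix m m ℂ}
    (hb : b.IsUpperTriangular) (hb_pos : ∀ i, 0 < b i i)
    (hc : c.IsUpperTriangular) (hc_pos : ∀ i, 0 < c i i)
    (hunit : wᴴ * w = 1) (hbwc : b * w = c) : w = 1 := by
  have : Invertible b := invertibleOfIsUnitDet b <| by
    rw [det_of_isUpperTriangular hb, isUnit_iff_ne_zero, Finset.prod_ne_zero_iff]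
    exact fun i _ => (hb_pos i).ne'
  have hw : w.IsUpperTriangular := by
    rw [← inv_mul_cancel_left_of_invertible b w, hbwc]
    exact (blockTriangular_inv_of_blockTriangular hb).mul hc
  have hw_diag := hw.isDiag_of_conjTranspose_mul_self hunit
  have hw_diag_one : ∀ i, w i i = 1 := fun i => by
    refine Complex.eq_one_of_mul_pos_of_star_mul_self (hb_pos i) ?_ ?_
    · rw [← hb.mul_apply_diag hw, hbwc]
      exact hc_pos i
    · have := hw_diag.conjTranspose.isUpperTriangular.mul_apply_diag hw i
      rwa [hunit, one_apply_eq, conjTranspose_apply, eq_comm] at this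
  rw [← hw_diag.diagonal_diag, ← diagonal_one]
  exact congrArg diagonal (funext hw_diag_one)

end Matrix

theorem inBgrp_iff {n : ℕ} {b : Matrix (Fin n) (Fin n) ℂ} :
    inBgrp b ↔ b.IsUpperTriangular ∧ ∀ i, 0 < b i i := by
  simp only [inBgrp, Complex.pos_iff, eq_comm (a := (0 : ℝ))]
  exact and_congr Iff.rfl (forall_congr' fun _ => and_comm)

theorem dressing_action_general (n : ℕ) (η₁ η₂ b b₁ u₁ b₂ u₂ b₃ u₃ : Matrix (Fin n) (Fin n) ℂ)
    (hb₂ : inBgrp b₂) (hb₃ : inBgrp b₃)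
    (hu₁ : u₁ᴴ * u₁ = 1) (hu₂ : u₂ᴴ * u₂ = 1) (hu₃ : u₃ᴴ * u₃ = 1)
    (h1 : η₂ * b = b₁ * u₁) (h2 : η₁ * b₁ = b₂ * u₂) (h3 : (η₁ * η₂) * b = b₃ * u₃) :
    b₂ = b₃ := by
  rw [← star_eq_conjTranspose, ← mem_unitaryGroup_iff'] at hu₁ hu₂ hu₃
  set w := u₂ * u₁ * star u₃
  have hw : w ∈ unitaryGroup (Fin n) ℂ := mul_mem (mul_mem hu₂ hu₁) (Unitary.star_mem hu₃)
  have hb₂w : b₂ * w = b₃ := calc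
    b₂ * w = η₁ * η₂ * b * star u₃ := by
      rw [← mul_assoc, ← mul_assoc, ← h2, mul_assoc η₁, ← h1, ← mul_assoc η₁]
    _ = b₃ := by rw [h3, mul_assoc, Unitary.mul_star_self_of_mem hu₃, mul_one]
  obtain ⟨hb₂, hb₂_pos⟩ := inBgrp_iff.1 hb₂
  obtain ⟨hb₃, hb₃_pos⟩ := inBgrp_iff.1 hb₃
  have hw_one : w = 1 :=
    hb₂.eq_one_of_mul_eq hb₂_pos hb₃ hb₃_pos (Unitary.star_mul_self_of_mem hw) hb₂w
  rw [← hb₂w, hw_one, mul_one]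

/-- The dressing action is a group action:
Dress_{η₁}(Dress_{η₂}(b)) = Dress_{η₁η₂}(b). -/
theorem dressing_action (n : ℕ) (η₁ η₂ b b₁ u₁ b₂ u₂ b₃ u₃ : Matrix (Fin n) (Fin n) ℂ)
    (hη₁ : η₁ᴴ * η₁ = 1) (hη₂ : η₂ᴴ * η₂ = 1)
    (hb : inBgrp b) (hb₁ : inBgrp b₁) (hb₂ : inBgrp b₂) (hb₃ : inBgrp b₃)
    (hu₁ : u₁ᴴ * u₁ = 1) (hu₂ : u₂ᴴ * u₂ = 1) (hu₃ : u₃ᴴ * u₃ = 1)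
    (h1 : η₂ * b = b₁ * u₁) (h2 : η₁ * b₁ = b₂ * u₂) (h3 : (η₁ * η₂) * b = b₃ * u₃) :
    b₂ = b₃ :=
  dressing_action_general n η₁ η₂ b b₁ u₁ b₂ u₂ b₃ u₃ hb₂ hb₃ hu₁ hu₂ hu₃ h1 h2 h3
end
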